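/- arXiv:2402.16222 — 4 statements merged into one kernel-verified Lean document; each statement's English description precedes it below -/
import Mathlib

section
/- Let η > 0. For every h ∈ L²(ℝ;ℂ), the function G(x) = χ_{[0,∞)}(x) e^{η x} ∫_{x}^{+∞} e^{-η|s|} h(s) ds satisfies ‖G‖_{L²(ℝ)} + ‖G‖_{L^∞(ℝ)} ≤ C ‖h‖_{L²(ℝ)} with a constant C depending only on η. -/
open MeasureTheory

/-- `G(x) = χ_{[0,∞)}(x) e^{η x} ∫_x^{+∞} e^{-η|s|} h(s) ds`. -/
noncomputable def kernelG (η : ℝ) (h : ℝ → ℂ) (x : ℝ) : ℂ :=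
  Set.indicator (Set.Ici (0 : ℝ))
    (fun x => (Real.exp (η * x) : ℂ) *
      ∫ s in Set.Ioi x, (Real.exp (-η * |s|) : ℂ) * h s) x

/-! For `0 ≤ x < s` the integrand of `kernelG` carries the weight `e^{ηx} e^{-η|s|} = e^{-η(s-x)}`,
so `‖G x‖ ≤ ∫ k(s - x) ‖h s‖ ds` for the one-sided exponential `k(t) = e^{-ηt} χ_{(0,∞)}(t)`,
which has integral `1/η` and is bounded by `1`. Cauchy–Schwarz with weight `k(· - x)` gives
`‖G x‖² ≤ η⁻¹ ∫ k(s - x) ‖h s‖² ds`: bounding `k ≤ 1` yields `‖G‖_∞² ≤ η⁻¹ ‖h‖₂²`, and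
integrating in `x` (Schur's test) yields `‖G‖₂² ≤ η⁻² ‖h‖₂²`. -/

open Set Function ENNReal

section WeightedCauchySchwarz

variable {β : Type*} [MeasurableSpace β] {ν : Measure β} {K f : β → ℝ≥0∞}

theorem ENNReal.sq_lintegral_mul_le (hK : AEMeasurable K ν) (hf : AEMeasurable f ν) :
    (∫⁻ s, K s * f s ∂ν) ^ 2 ≤ (∫⁻ s, K s ∂ν) * ∫⁻ s, K s * f s ^ 2 ∂ν := by
  have holder := lintegral_mul_norm_pow_le (g := fun s => K s * f s ^ 2) hK
    (hK.mul (hf.pow_const 2)) (p := 2⁻¹) (q := 2⁻¹) (by norm_num) (by norm_num) (by norm_num)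
  have split : ∀ s, K s ^ (2⁻¹ : ℝ) * (K s * f s ^ 2) ^ (2⁻¹ : ℝ) = K s * f s := fun s => by
    have hf2 : (f s ^ 2) ^ (2⁻¹ : ℝ) = f s := by
      exact_mod_cast pow_rpow_inv_natCast two_ne_zero (f s)
    rw [mul_rpow_of_nonneg _ _ (by norm_num), hf2, ← mul_assoc,
      ← rpow_add_of_nonneg _ _ (by norm_num) (by norm_num)]
    norm_num
  simp only [split] at holder
  calc (∫⁻ s, K s * f s ∂ν) ^ 2
      ≤ ((∫⁻ s, K s ∂ν) ^ (2⁻¹ : ℝ) * (∫⁻ s, K s * f s ^ 2 ∂ν) ^ (2⁻¹ : ℝ)) ^ 2 := by gcongr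
    _ = (∫⁻ s, K s ∂ν) * ∫⁻ s, K s * f s ^ 2 ∂ν := by
      have sq_sqrt : ∀ x : ℝ≥0∞, (x ^ (2⁻¹ : ℝ)) ^ 2 = x := fun x => by
        exact_mod_cast rpow_inv_natCast_pow two_ne_zero x
      rw [mul_pow, sq_sqrt, sq_sqrt]

theorem ENNReal.sq_lintegral_mul_le_of_le_one (hK : AEMeasurable K ν) (hf : AEMeasurable f ν)
    (hK_le : ∀ s, K s ≤ 1) :
    (∫⁻ s, K s * f s ∂ν) ^ 2 ≤ (∫⁻ s, K s ∂ν) * ∫⁻ s, f s ^ 2 ∂ν :=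
  (sq_lintegral_mul_le hK hf).trans <| by gcongr with s; exact mul_le_of_le_one_left' (hK_le s)

end WeightedCauchySchwarz

section SchurTest

variable {α β E F : Type*} [MeasurableSpace α] [MeasurableSpace β] {μ : Measure α} {ν : Measure β}
  [NormedAddCommGroup E] [NormedAddCommGroup F]

theorem lintegral_sq_lintegral_mul_le [SFinite μ] [SFinite ν] {K : α → β → ℝ≥0∞}
    (hK : Measurable (uncurry K)) {f : β → ℝ≥0∞} (hf : AEMeasurable f ν) {A B : ℝ≥0∞}
    (hrow : ∀ x, ∫⁻ s, K x s ∂ν ≤ A) (hcol : ∀ s, ∫⁻ x, K x s ∂μ ≤ B) :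
    ∫⁻ x, (∫⁻ s, K x s * f s ∂ν) ^ 2 ∂μ ≤ A * B * ∫⁻ s, f s ^ 2 ∂ν := by
  have hKf : AEMeasurable (uncurry fun x s => K x s * f s ^ 2) (μ.prod ν) :=
    hK.aemeasurable.mul (hf.pow_const 2).comp_snd
  calc ∫⁻ x, (∫⁻ s, K x s * f s ∂ν) ^ 2 ∂μ
      ≤ ∫⁻ x, A * ∫⁻ s, K x s * f s ^ 2 ∂ν ∂μ := lintegral_mono fun x =>
        (sq_lintegral_mul_le hK.of_uncurry_left.aemeasurable hf).trans (by gcongr; exact hrow x)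
    _ = A * ∫⁻ s, (∫⁻ x, K x s ∂μ) * f s ^ 2 ∂ν := by
        have hinner : AEMeasurable (fun x => ∫⁻ s, K x s * f s ^ 2 ∂ν) μ :=
          hKf.lintegral_prod_right'
        rw [lintegral_const_mul'' _ hinner, lintegral_lintegral_swap hKf]
        simp_rw [lintegral_mul_const _ hK.of_uncurry_right]
    _ ≤ A * B * ∫⁻ s, f s ^ 2 ∂ν := by
        rw [mul_assoc, ← lintegral_const_mul'' B (hf.pow_const 2)]
        gcongr with s
        exact hcol s

theorem sq_eLpNorm_two (u : α → E) : eLpNorm u 2 μ ^ 2 = ∫⁻ x, ‖u x‖ₑ ^ 2 ∂μ := by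
  simpa using eLpNorm_nnreal_pow_eq_lintegral (μ := μ) (f := u) (p := 2) two_ne_zero

theorem eLpNorm_two_le_of_enorm_le_lintegral_mul [SFinite μ] [SFinite ν] {K : α → β → ℝ≥0∞}
    (hK : Measurable (uncurry K)) {u : α → E} {h : β → F} (hh : AEStronglyMeasurable h ν)
    (hu : ∀ x, ‖u x‖ₑ ≤ ∫⁻ s, K x s * ‖h s‖ₑ ∂ν) {a b : ℝ≥0∞}
    (hrow : ∀ x, ∫⁻ s, K x s ∂ν ≤ a ^ 2) (hcol : ∀ s, ∫⁻ x, K x s ∂μ ≤ b ^ 2) :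
    eLpNorm u 2 μ ≤ a * b * eLpNorm h 2 ν := by
  refine (ENNReal.pow_le_pow_left_iff two_ne_zero).1 ?_
  calc eLpNorm u 2 μ ^ 2 = ∫⁻ x, ‖u x‖ₑ ^ 2 ∂μ := sq_eLpNorm_two u
    _ ≤ ∫⁻ x, (∫⁻ s, K x s * ‖h s‖ₑ ∂ν) ^ 2 ∂μ := by gcongr with x; exact hu x
    _ ≤ a ^ 2 * b ^ 2 * ∫⁻ s, ‖h s‖ₑ ^ 2 ∂ν :=
        lintegral_sq_lintegral_mul_le hK hh.enorm hrow hcol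
    _ = (a * b * eLpNorm h 2 ν) ^ 2 := by rw [mul_pow, mul_pow, sq_eLpNorm_two]

theorem eLpNorm_top_le_of_enorm_le_lintegral_mul {K : α → β → ℝ≥0∞}
    (hK : ∀ x, AEMeasurable (K x) ν) (hK_le : ∀ x s, K x s ≤ 1) {u : α → E} {h : β → F}
    (hh : AEStronglyMeasurable h ν) (hu : ∀ x, ‖u x‖ₑ ≤ ∫⁻ s, K x s * ‖h s‖ₑ ∂ν) {a : ℝ≥0∞}
    (hrow : ∀ x, ∫⁻ s, K x s ∂ν ≤ a ^ 2) :
    eLpNorm u ⊤ μ ≤ a * eLpNorm h 2 ν := by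
  refine eLpNormEssSup_le_of_ae_enorm_bound (ae_of_all _ fun x => ?_)
  refine (ENNReal.pow_le_pow_left_iff two_ne_zero).1 ?_
  calc ‖u x‖ₑ ^ 2 ≤ (∫⁻ s, K x s * ‖h s‖ₑ ∂ν) ^ 2 := by gcongr; exact hu x
    _ ≤ a ^ 2 * ∫⁻ s, ‖h s‖ₑ ^ 2 ∂ν :=
        (sq_lintegral_mul_le_of_le_one (hK x) hh.enorm (hK_le x)).trans (by gcongr; exact hrow x)
    _ = (a * eLpNorm h 2 ν) ^ 2 := by rw [mul_pow, sq_eLpNorm_two]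

end SchurTest

noncomputable def expDecay (η t : ℝ) : ℝ≥0∞ :=
  (Ioi 0).indicator (fun t => ENNReal.ofReal (Real.exp (-η * t))) t

theorem measurable_expDecay (η : ℝ) : Measurable (expDecay η) :=
  (by fun_prop : Measurable fun t : ℝ => ENNReal.ofReal (Real.exp (-η * t))).indicator
    measurableSet_Ioi

theorem expDecay_le_one {η : ℝ} (hη : 0 ≤ η) (t : ℝ) : expDecay η t ≤ 1 := by
  unfold expDecay
  by_cases ht : t ∈ Ioi 0
  · rw [indicator_of_mem ht, ENNReal.ofReal_le_one, Real.exp_le_one_iff]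
    nlinarith [mem_Ioi.1 ht]
  · simp [indicator_of_notMem ht]

theorem lintegral_expDecay {η : ℝ} (hη : 0 < η) : ∫⁻ t, expDecay η t = ENNReal.ofReal η⁻¹ := by
  unfold expDecay
  rw [lintegral_indicator measurableSet_Ioi, ← ofReal_integral_eq_lintegral_ofReal
    (integrableOn_exp_mul_Ioi (neg_neg_of_pos hη) 0) (ae_of_all _ fun _ => (Real.exp_pos _).le),
    integral_exp_mul_Ioi (neg_neg_of_pos hη)]
  simp

theorem Complex.enorm_ofReal_of_nonneg {r : ℝ} (hr : 0 ≤ r) : ‖(r : ℂ)‖ₑ = ENNReal.ofReal r := by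
  rw [← ofReal_norm, Complex.norm_real, Real.norm_of_nonneg hr]

theorem enorm_kernelG_le (η : ℝ) (h : ℝ → ℂ) (x : ℝ) :
    ‖kernelG η h x‖ₑ ≤ ∫⁻ s, expDecay η (s - x) * ‖h s‖ₑ := by
  by_cases hx : x ∈ Ici 0
  swap
  · simp [kernelG, indicator_of_notMem hx]
  have weight : ∀ s ∈ Ioi x,
      ENNReal.ofReal (Real.exp (η * x)) * ‖(Real.exp (-η * |s|) : ℂ) * h s‖ₑ
        = ENNReal.ofReal (Real.exp (-η * (s - x))) * ‖h s‖ₑ := fun s hs => by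
    have hs0 : 0 < s := lt_of_le_of_lt hx hs
    rw [enorm_mul, Complex.enorm_ofReal_of_nonneg (Real.exp_pos _).le, ← mul_assoc,
      ← ENNReal.ofReal_mul (Real.exp_pos _).le, ← Real.exp_add, abs_of_pos hs0]
    ring_nf
  calc ‖kernelG η h x‖ₑ
      ≤ ENNReal.ofReal (Real.exp (η * x)) * ∫⁻ s in Ioi x, ‖(Real.exp (-η * |s|) : ℂ) * h s‖ₑ := by
        rw [kernelG, indicator_of_mem hx, enorm_mul,
          Complex.enorm_ofReal_of_nonneg (Real.exp_pos _).le]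
        gcongr
        exact enorm_integral_le_lintegral_enorm _
    _ = ∫⁻ s in Ioi x, ENNReal.ofReal (Real.exp (-η * (s - x))) * ‖h s‖ₑ := by
        rw [← lintegral_const_mul' _ _ ENNReal.ofReal_ne_top]
        exact setLIntegral_congr_fun measurableSet_Ioi weight
    _ = ∫⁻ s, expDecay η (s - x) * ‖h s‖ₑ := by
        rw [← lintegral_indicator measurableSet_Ioi]
        congr with s
        by_cases hs : x < s <;> simp [expDecay, hs]

theorem kernelG_L2_Linfty_bound (η : ℝ) (hη : 0 < η) :
    ∃ C > 0, ∀ h : ℝ → ℂ, MemLp h 2 (volume : Measure ℝ) →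
      eLpNorm (kernelG η h) 2 volume + eLpNorm (kernelG η h) ⊤ volume
        ≤ ENNReal.ofReal C * eLpNorm h 2 volume := by
  refine ⟨η⁻¹ + (√η)⁻¹, by positivity, fun h hh => ?_⟩
  have hmeas := hh.aestronglyMeasurable
  set a := ENNReal.ofReal (√η)⁻¹
  have ha : ∫⁻ t, expDecay η t = a ^ 2 := by
    rw [lintegral_expDecay hη, ← ENNReal.ofReal_pow (by positivity), inv_pow,
      Real.sq_sqrt hη.le]
  have hK : Measurable (uncurry fun x s => expDecay η (s - x)) :=
    (measurable_expDecay η).comp (measurable_snd.sub measurable_fst)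
  have hrow : ∀ x, ∫⁻ s, expDecay η (s - x) ≤ a ^ 2 := fun x =>
    (lintegral_sub_right_eq_self _ x).trans ha |>.le
  have hcol : ∀ s, ∫⁻ x, expDecay η (s - x) ≤ a ^ 2 := fun s =>
    (lintegral_sub_left_eq_self _ s).trans ha |>.le
  calc eLpNorm (kernelG η h) 2 volume + eLpNorm (kernelG η h) ⊤ volume
      ≤ a * a * eLpNorm h 2 volume + a * eLpNorm h 2 volume := by
        gcongr
        · exact eLpNorm_two_le_of_enorm_le_lintegral_mul hK hmeas (enorm_kernelG_le η h) hrow hcol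
        · exact eLpNorm_top_le_of_enorm_le_lintegral_mul (fun _ => hK.of_uncurry_left.aemeasurable)
            (fun _ _ => expDecay_le_one hη.le _) hmeas (enorm_kernelG_le η h) hrow
    _ = ENNReal.ofReal (η⁻¹ + (√η)⁻¹) * eLpNorm h 2 volume := by
        rw [← add_mul, ENNReal.ofReal_add (by positivity) (by positivity), ← sq, ← ha,
          lintegral_expDecay hη]
end

section
/- Let η > 0. For every h ∈ L²(ℝ;ℂ), the function H(x) = χ_{(-∞,0]}(x) · x · e^{η x} ∫_{x}^{+∞} e^{-η|s|} h(s) ds satisfies ‖H‖_{L²(ℝ)} ≤ C ‖h‖_{L²(ℝ)} with C depending only on η. -/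
open MeasureTheory

/-- `H(x) = χ_{(-∞,0]}(x) · x · e^{η x} ∫_x^{+∞} e^{-η|s|} h(s) ds`. -/
noncomputable def kernelH (η : ℝ) (h : ℝ → ℂ) (x : ℝ) : ℂ :=
  Set.indicator (Set.Iic (0 : ℝ))
    (fun x => (x : ℂ) * (Real.exp (η * x) : ℂ) *
      ∫ s in Set.Ioi x, (Real.exp (-η * |s|) : ℂ) * h s) x

open Set Real
open scoped ENNReal

/-!
By Cauchy–Schwarz, `|∫_x^∞ e^{-η|s|} h(s) ds| ≤ ‖e^{-η|·|}‖₂ ‖h‖₂` uniformly in `x`, so `|H|` is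
dominated pointwise by `‖e^{-η|·|}‖₂ ‖h‖₂ · |φ|` with `φ = χ_{(-∞,0]}(x) x e^{ηx}`. Both
`e^{-η|·|}` and `φ` are in `L²` because the exponential decay beats the polynomial factor, hence
`‖H‖₂ ≤ ‖e^{-η|·|}‖₂ ‖φ‖₂ ‖h‖₂`.
-/

theorem enorm_setIntegral_mul_le_eLpNorm_mul_eLpNorm {α 𝕜 : Type*} [MeasurableSpace α]
    {μ : Measure α} [RCLike 𝕜] {p q : ℝ≥0∞} [p.HolderConjugate q] {f g : α → 𝕜}
    (hf : AEStronglyMeasurable f μ) (hg : AEStronglyMeasurable g μ) (s : Set α) :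
    ‖∫ x in s, f x * g x ∂μ‖ₑ ≤ eLpNorm f p μ * eLpNorm g q μ :=
  calc ‖∫ x in s, f x * g x ∂μ‖ₑ
      ≤ ∫⁻ x in s, ‖f x * g x‖ₑ ∂μ := enorm_integral_le_lintegral_enorm _
    _ ≤ ∫⁻ x, ‖f x * g x‖ₑ ∂μ := setLIntegral_le_lintegral _ _
    _ = eLpNorm (f • g) 1 μ := eLpNorm_one_eq_lintegral_enorm.symm
    _ ≤ eLpNorm f p μ * eLpNorm g q μ := eLpNorm_smul_le_mul_eLpNorm hg hf

theorem integrableOn_Iic_zero_of_comp_neg {E : Type*} [NormedAddCommGroup E] {f : ℝ → E}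
    (hf : IntegrableOn (fun x => f (-x)) (Ioi 0)) : IntegrableOn f (Iic 0) := by
  simpa using IntegrableOn.comp_neg_Iic (c := 0) (f := fun x => f (-x)) (μ := volume)
    (by rwa [neg_zero, integrableOn_Ici_iff_integrableOn_Ioi])

theorem integrable_exp_neg_mul_abs {c : ℝ} (hc : 0 < c) :
    Integrable fun x : ℝ => exp (-c * |x|) := by
  have hIoi : IntegrableOn (fun x : ℝ => exp (-c * |x|)) (Ioi 0) :=
    (exp_neg_integrableOn_Ioi 0 hc).congr_fun (fun x hx => by rw [abs_of_pos hx])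
      measurableSet_Ioi
  have hIic : IntegrableOn (fun x : ℝ => exp (-c * |x|)) (Iic 0) :=
    integrableOn_Iic_zero_of_comp_neg (by simpa only [abs_neg] using hIoi)
  simpa using hIic.union hIoi

theorem integrableOn_sq_mul_exp_mul_Iic {c : ℝ} (hc : 0 < c) :
    IntegrableOn (fun x : ℝ => x ^ 2 * exp (c * x)) (Iic 0) :=
  integrableOn_Iic_zero_of_comp_neg <| by
    simpa using integrableOn_rpow_mul_exp_neg_mul_rpow (s := 2) (p := 1) (by norm_num) one_pos hc

theorem memLp_two_exp_neg_mul_abs {c : ℝ} (hc : 0 < c) :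
    MemLp (fun x : ℝ => exp (-c * |x|)) 2 := by
  rw [memLp_two_iff_integrable_sq (by fun_prop)]
  refine (integrable_exp_neg_mul_abs (mul_pos two_pos hc)).congr (.of_forall fun x => ?_)
  simp only [← exp_nat_mul]
  ring_nf

theorem memLp_two_indicator_mul_exp_mul_Iic {c : ℝ} (hc : 0 < c) :
    MemLp ((Iic 0).indicator fun x : ℝ => x * exp (c * x)) 2 := by
  rw [memLp_indicator_iff_restrict measurableSet_Iic, memLp_two_iff_integrable_sq (by fun_prop)]
  refine (integrableOn_sq_mul_exp_mul_Iic (mul_pos two_pos hc)).congr_fun (fun x _ => ?_)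
    measurableSet_Iic
  simp only [mul_pow, ← exp_nat_mul]
  ring_nf

theorem kernelH_eq_mul (η : ℝ) (h : ℝ → ℂ) (x : ℝ) :
    kernelH η h x = (((Iic 0).indicator (fun x : ℝ => x * exp (η * x)) x : ℝ) : ℂ) *
      ∫ s in Ioi x, (exp (-η * |s|) : ℂ) * h s := by
  by_cases hx : x ∈ Iic 0 <;> simp [kernelH, hx]

theorem kernelH_L2_bound (η : ℝ) (hη : 0 < η) :
    ∃ C > 0, ∀ h : ℝ → ℂ, MemLp h 2 (volume : Measure ℝ) →
      eLpNorm (kernelH η h) 2 volume ≤ ENNReal.ofReal C * eLpNorm h 2 volume := by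
  set w : ℝ → ℂ := fun s => (exp (-η * |s|) : ℂ)
  set φ : ℝ → ℝ := (Iic 0).indicator fun x => x * exp (η * x)
  have hw : MemLp w 2 := (memLp_two_exp_neg_mul_abs hη).ofReal
  have hφ : MemLp φ 2 := memLp_two_indicator_mul_exp_mul_Iic hη
  obtain ⟨C, hC, hwφ⟩ : ∃ C > 0, eLpNorm w 2 volume * eLpNorm φ 2 volume ≤ ENNReal.ofReal C :=
    ⟨(eLpNorm w 2 volume * eLpNorm φ 2 volume).toReal + 1, by positivity,
      ENNReal.le_ofReal_iff_toReal_le (by finiteness [hw.2, hφ.2]) (by positivity) |>.mpr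
        (by linarith)⟩
  refine ⟨C, hC, fun h hh => ?_⟩
  have hpt (x : ℝ) : ‖kernelH η h x‖ₑ ≤ eLpNorm w 2 volume * eLpNorm h 2 volume * ‖φ x‖ₑ := by
    rw [kernelH_eq_mul, enorm_mul, mul_comm, enorm_eq_nnnorm (φ x : ℂ), Complex.nnnorm_real,
      ← enorm_eq_nnnorm]
    gcongr
    exact enorm_setIntegral_mul_le_eLpNorm_mul_eLpNorm hw.1 hh.1 _
  calc eLpNorm (kernelH η h) 2 volume
      ≤ eLpNorm w 2 volume * eLpNorm h 2 volume * eLpNorm φ 2 volume :=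
        eLpNorm_le_mul_eLpNorm_of_ae_le_mul'' 2 hφ.1 (.of_forall hpt)
    _ = eLpNorm w 2 volume * eLpNorm φ 2 volume * eLpNorm h 2 volume := by ring
    _ ≤ ENNReal.ofReal C * eLpNorm h 2 volume := by gcongr
end

section
/- Let η > 0 and z₁ ∈ ℂ \\ {0} with Im(z₁²) = η > 0. Then for all real 0 ≤ x ≤ s one has |(\bar{z}₁e^{-2ηx}+z₁e^{2ηx})/(\bar{z}₁e^{-2ηs}+z₁e^{2ηs})| ≲ e^{2η(x-s)}, with implicit constant depending only on z₁ and η. -/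
open Complex

/-- Pointwise ratio bound for the denominators of the fundamental matrix:
`|(\bar z₁ e^{-2ηx} + z₁ e^{2ηx}) / (\bar z₁ e^{-2ηs} + z₁ e^{2ηs})| ≲ e^{2η(x-s)}`
for `0 ≤ x ≤ s`. -/
theorem denominator_ratio_bound (z₁ : ℂ) (hz₁ : z₁ ≠ 0) (η : ℝ)
    (hη : (z₁ ^ 2).im = η) (hηpos : 0 < η) :
    ∃ C > 0, ∀ x s : ℝ, 0 ≤ x → x ≤ s →
      ‖((starRingEnd ℂ) z₁ * Complex.exp (-2 * (η : ℂ) * x)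
          + z₁ * Complex.exp (2 * (η : ℂ) * x)) /
        ((starRingEnd ℂ) z₁ * Complex.exp (-2 * (η : ℂ) * s)
          + z₁ * Complex.exp (2 * (η : ℂ) * s))‖
        ≤ C * Real.exp (2 * η * (x - s)) := by
  have him : (z₁ ^ 2).im = 2 * z₁.re * z₁.im := by
    simp [pow_two, Complex.mul_im]; ring
  have hre : z₁.re ≠ 0 := by
    intro h
    rw [hη] at him
    rw [h] at him
    nlinarith
  have hrepos : 0 < |z₁.re| := abs_pos.mpr hre
  have hz₁pos : 0 < ‖z₁‖ := norm_pos_iff.mpr hz₁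
  refine ⟨2 * ‖z₁‖ / |z₁.re|, by positivity, ?_⟩
  intro x s hx hxs
  have hEp : ∀ t : ℝ, Complex.exp (2 * (η : ℂ) * t) = ((Real.exp (2 * η * t) : ℝ) : ℂ) := by
    intro t
    rw [Complex.ofReal_exp]
    norm_cast
  have hEm : ∀ t : ℝ, Complex.exp (-2 * (η : ℂ) * t) = ((Real.exp (-(2 * η * t)) : ℝ) : ℂ) := by
    intro t
    rw [Complex.ofReal_exp]
    push_cast
    ring_nf
  rw [hEp, hEp, hEm, hEm]
  set a := Real.exp (-(2 * η * x)) with ha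
  set b := Real.exp (2 * η * x) with hb
  set c := Real.exp (-(2 * η * s)) with hc
  set d := Real.exp (2 * η * s) with hd
  have hapos : 0 < a := Real.exp_pos _
  have hbpos : 0 < b := Real.exp_pos _
  have hcpos : 0 < c := Real.exp_pos _
  have hdpos : 0 < d := Real.exp_pos _
  have hab : a ≤ b := Real.exp_le_exp.mpr (by nlinarith)
  -- numerator bound
  have hN : ‖(starRingEnd ℂ) z₁ * (a : ℂ) + z₁ * (b : ℂ)‖ ≤ 2 * ‖z₁‖ * b := by
    calc ‖(starRingEnd ℂ) z₁ * (a : ℂ) + z₁ * (b : ℂ)‖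
        ≤ ‖(starRingEnd ℂ) z₁ * (a : ℂ)‖ + ‖z₁ * (b : ℂ)‖ := norm_add_le _ _
      _ = ‖z₁‖ * a + ‖z₁‖ * b := by
          simp [norm_mul, Complex.norm_real, abs_of_pos hapos, abs_of_pos hbpos]
      _ ≤ 2 * ‖z₁‖ * b := by nlinarith
  -- denominator bound
  have hDre : ((starRingEnd ℂ) z₁ * (c : ℂ) + z₁ * (d : ℂ)).re = z₁.re * (c + d) := by
    simp [Complex.add_re, Complex.mul_re]
    ring
  have hD : |z₁.re| * d ≤ ‖(starRingEnd ℂ) z₁ * (c : ℂ) + z₁ * (d : ℂ)‖ := by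
    calc |z₁.re| * d ≤ |z₁.re| * (c + d) := by nlinarith
      _ = |z₁.re * (c + d)| := by
          rw [abs_mul, abs_of_pos (show (0:ℝ) < c + d by linarith)]
      _ = |((starRingEnd ℂ) z₁ * (c : ℂ) + z₁ * (d : ℂ)).re| := by rw [hDre]
      _ ≤ ‖(starRingEnd ℂ) z₁ * (c : ℂ) + z₁ * (d : ℂ)‖ := Complex.abs_re_le_norm _
  have hDpos : 0 < ‖(starRingEnd ℂ) z₁ * (c : ℂ) + z₁ * (d : ℂ)‖ :=
    lt_of_lt_of_le (by positivity) hD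
  rw [norm_div]
  have key : ‖(starRingEnd ℂ) z₁ * (a : ℂ) + z₁ * (b : ℂ)‖ /
      ‖(starRingEnd ℂ) z₁ * (c : ℂ) + z₁ * (d : ℂ)‖ ≤ (2 * ‖z₁‖ * b) / (|z₁.re| * d) :=
    div_le_div₀ (by positivity) hN (by positivity) hD
  refine key.trans (le_of_eq ?_)
  have hexp : Real.exp (2 * η * (x - s)) = b / d := by
    rw [hb, hd, ← Real.exp_sub]
    ring_nf
  rw [hexp]
  field_simp
end

section
/- Let z₁ ∈ ℂ with η := Im(z₁²) > 0, and let q ∈ L²(ℝ;ℂ). Consider the Volterra integral operator T on L^∞(ℝ) × (L^∞(ℝ) ∩ L²(ℝ)) defined by (Tf)₁(x) = z₁ ∫_{-∞}^{x} q(s) f₂(s) ds and (Tf)₂(x) = -z₁ ∫_{-∞}^{x} e^{2i z₁²(x-s)} \bar{q}(s) f₁(s) ds. Then ‖(Tf)₁‖_{L^∞} ≤ |z₁| ‖q‖_{L²} ‖f₂‖_{L²}, ‖(Tf)₂‖_{L^∞} ≤ C(z₁,η) ‖q‖_{L²} ‖f₁‖_{L^∞}, and ‖(Tf)₂‖_{L²}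 ≤ C(z₁,η) ‖q‖_{L²} ‖f₁‖_{L^∞}. Consequently, if ‖q‖_{L²} is sufficiently small, T is a contraction on this product space. -/
open MeasureTheory Complex

/-- First component of the Volterra operator:
`(Tf)₁(x) = z₁ ∫_{-∞}^x q(s) f₂(s) ds`. -/
noncomputable def volterra1 (z₁ : ℂ) (q f₂ : ℝ → ℂ) (x : ℝ) : ℂ :=
  z₁ * ∫ s in Set.Iic x, q s * f₂ s

/-- Second component of the Volterra operator:
`(Tf)₂(x) = -z₁ ∫_{-∞}^x e^{2 i z₁² (x-s)} \bar q(s) f₁(s) ds`. -/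
noncomputable def volterra2 (z₁ : ℂ) (q f₁ : ℝ → ℂ) (x : ℝ) : ℂ :=
  -z₁ * ∫ s in Set.Iic x,
    Complex.exp (2 * Complex.I * z₁ ^ 2 * (x - s)) * (starRingEnd ℂ) (q s) * f₁ s

/-!
For `s ≤ x` the kernel of `(Tf)₂` has modulus `e^{-2η(x-s)}`, so `|(Tf)₂|` is
dominated by `|z₁| ‖f₁‖_∞` times the convolution of `|q|` with `k(u) = 1_{u ≥ 0} e^{-2ηu}`.
Cauchy–Schwarz bounds this convolution by `‖k‖₂ ‖q‖₂` pointwise, and Young's inequality by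
`‖k‖₁ ‖q‖₂` in `L²`; the bound on `(Tf)₁` is Cauchy–Schwarz. Taking `‖q‖₂` small then makes
every coefficient at most `1/4`. -/

open scoped ENNReal

theorem eLpNorm_two_eq_lintegral {α : Type*} [MeasurableSpace α] {μ : Measure α}
    (f : α → ℝ≥0∞) : eLpNorm f 2 μ = (∫⁻ x, f x ^ (2:ℝ) ∂μ) ^ (1 / 2 : ℝ) := by
  simp [eLpNorm_eq_lintegral_rpow_enorm_toReal]

theorem ENNReal.rpow_two_mul_rpow_half_mul_rpow_half (a b : ℝ≥0∞) :
    (a ^ (2:ℝ) * b) ^ (1 / 2 : ℝ) * b ^ (1 / 2 : ℝ) = a * b := by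
  rw [← ENNReal.mul_rpow_of_nonneg _ _ (by norm_num), mul_assoc, ← pow_two, ← ENNReal.rpow_two b,
    ← ENNReal.mul_rpow_of_nonneg _ _ (by norm_num), ← ENNReal.rpow_mul]
  norm_num

section LConvolution

variable {G : Type*} [AddCommGroup G] [MeasurableSpace G] [MeasurableAdd₂ G] [MeasurableNeg G]
  {μ : Measure G} [SFinite μ] [μ.IsAddLeftInvariant] {f g : G → ℝ≥0∞}

theorem lintegral_lconvolution (hf : AEMeasurable f μ) (hg : AEMeasurable g μ) :
    ∫⁻ x, (f ⋆ₗ[μ] g) x ∂μ = (∫⁻ x, f x ∂μ) * ∫⁻ x, g x ∂μ := by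
  simp only [lconvolution_def]
  rw [lintegral_lintegral_swap (by fun_prop), ← lintegral_mul_const'' _ hf]
  refine lintegral_congr fun y => ?_
  rw [lintegral_const_mul'' _ (by fun_prop), lintegral_add_left_eq_self]

variable [μ.IsNegInvariant]

theorem lconvolution_le_eLpNorm_mul_eLpNorm (hf : AEMeasurable f μ) (hg : AEMeasurable g μ)
    (x : G) : (f ⋆ₗ[μ] g) x ≤ eLpNorm f 2 μ * eLpNorm g 2 μ := by
  have h := ENNReal.lintegral_mul_le_Lp_mul_Lq μ Real.HolderConjugate.two_two hf
    (g := fun y => g (-y + x)) (by fun_prop)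
  simp_rw [neg_add_eq_sub, lintegral_sub_left_eq_self (fun y => g y ^ (2:ℝ)) x] at h
  simpa [lconvolution_def, eLpNorm_two_eq_lintegral, neg_add_eq_sub] using h

theorem lconvolution_rpow_two_le (hf : AEMeasurable f μ) (hg : AEMeasurable g μ) (x : G) :
    (f ⋆ₗ[μ] g) x ^ (2:ℝ) ≤ ((fun y => f y ^ (2:ℝ)) ⋆ₗ[μ] g) x * ∫⁻ y, g y ∂μ := by
  have h := ENNReal.lintegral_mul_norm_pow_le (μ := μ) (f := fun y => f y ^ (2:ℝ) * g (-y + x))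
    (g := fun y => g (-y + x)) (by fun_prop) (by fun_prop) (p := 1 / 2) (q := 1 / 2)
    (by norm_num) (by norm_num) (by norm_num)
  simp_rw [ENNReal.rpow_two_mul_rpow_half_mul_rpow_half, neg_add_eq_sub,
    lintegral_sub_left_eq_self g x] at h
  rw [lconvolution_def, lconvolution_def]
  calc _ ≤ ((∫⁻ y, f y ^ (2:ℝ) * g (-y + x) ∂μ) ^ (1 / 2 : ℝ)
          * (∫⁻ y, g y ∂μ) ^ (1 / 2 : ℝ)) ^ (2:ℝ) := by
        gcongr
        simpa [neg_add_eq_sub] using h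
    _ = _ := by
        rw [ENNReal.mul_rpow_of_nonneg _ _ (by norm_num), ← ENNReal.rpow_mul, ← ENNReal.rpow_mul]
        norm_num

theorem eLpNorm_lconvolution_le (hf : AEMeasurable f μ) (hg : AEMeasurable g μ) :
    eLpNorm (f ⋆ₗ[μ] g) 2 μ ≤ eLpNorm g 1 μ * eLpNorm f 2 μ := by
  simp only [eLpNorm_two_eq_lintegral, eLpNorm_one_eq_lintegral_enorm, enorm_eq_self]
  calc (∫⁻ x, (f ⋆ₗ[μ] g) x ^ (2:ℝ) ∂μ) ^ (1 / 2 : ℝ)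
      ≤ (∫⁻ x, ((fun y => f y ^ (2:ℝ)) ⋆ₗ[μ] g) x * ∫⁻ y, g y ∂μ ∂μ) ^ (1 / 2 : ℝ) := by
        gcongr with x
        exact lconvolution_rpow_two_le hf hg x
    _ = ((∫⁻ y, g y ∂μ) ^ (2:ℝ) * ∫⁻ y, f y ^ (2:ℝ) ∂μ) ^ (1 / 2 : ℝ) := by
        rw [lintegral_mul_const'' _ (by fun_prop), lintegral_lconvolution (by fun_prop) hg,
          ENNReal.rpow_two, pow_two]
        ring_nf
    _ = (∫⁻ y, g y ∂μ) * (∫⁻ y, f y ^ (2:ℝ) ∂μ) ^ (1 / 2 : ℝ) := by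
        rw [ENNReal.mul_rpow_of_nonneg _ _ (by norm_num), ← ENNReal.rpow_mul]
        norm_num

end LConvolution

noncomputable def expDecayKernel (c : ℝ) : ℝ → ℝ≥0∞ :=
  (Set.Ici 0).indicator fun u => ENNReal.ofReal (Real.exp (-c * u))

namespace expDecayKernel

theorem measurable (c : ℝ) : Measurable (expDecayKernel c) :=
  (by fun_prop : Measurable fun u : ℝ => ENNReal.ofReal (Real.exp (-c * u))).indicator
    measurableSet_Ici

theorem rpow_two (c u : ℝ) : expDecayKernel c u ^ (2:ℝ) = expDecayKernel (2 * c) u := by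
  by_cases hu : 0 ≤ u
  · simp only [expDecayKernel, Set.indicator_of_mem (Set.mem_Ici.2 hu),
      ENNReal.ofReal_rpow_of_nonneg (Real.exp_nonneg _) zero_le_two, ← Real.exp_mul]
    ring_nf
  · simp [expDecayKernel, hu]

theorem lintegral {c : ℝ} (hc : 0 < c) : ∫⁻ u, expDecayKernel c u = ENNReal.ofReal c⁻¹ := by
  rw [expDecayKernel, lintegral_indicator measurableSet_Ici,
    ← ofReal_integral_eq_lintegral_ofReal, integral_Ici_eq_integral_Ioi,
    integral_exp_mul_Ioi (neg_lt_zero.2 hc)]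
  · simp
  · exact (integrableOn_Ici_iff_integrableOn_Ioi).2
      (integrableOn_exp_mul_Ioi (neg_lt_zero.2 hc) 0)
  · exact Filter.Eventually.of_forall fun u => (Real.exp_pos _).le

theorem eLpNorm_one {c : ℝ} (hc : 0 < c) :
    eLpNorm (expDecayKernel c) 1 volume = ENNReal.ofReal c⁻¹ := by
  simp [eLpNorm_one_eq_lintegral_enorm, lintegral hc]

theorem eLpNorm_two {c : ℝ} (hc : 0 < c) :
    eLpNorm (expDecayKernel c) 2 volume = ENNReal.ofReal √(2 * c)⁻¹ := by
  rw [eLpNorm_two_eq_lintegral, lintegral_congr (rpow_two c), lintegral (by positivity),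
    ENNReal.ofReal_rpow_of_nonneg (by positivity) (by norm_num), Real.sqrt_eq_rpow]

theorem lconvolution_eq (g : ℝ → ℝ≥0∞) (c x : ℝ) :
    (g ⋆ₗ expDecayKernel c) x
      = ∫⁻ s in Set.Iic x, g s * ENNReal.ofReal (Real.exp (-c * (x - s))) := by
  rw [lconvolution_def, ← lintegral_indicator measurableSet_Iic]
  refine lintegral_congr fun s => ?_
  simp [expDecayKernel, Set.indicator_apply, neg_add_eq_sub]

end expDecayKernel

theorem enorm_cexp_two_I_mul (w : ℂ) (t : ℝ) :
    ‖Complex.exp (2 * I * w * t)‖ₑ = ENNReal.ofReal (Real.exp (-(2 * w.im) * t)) := by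
  rw [← ofReal_norm, Complex.norm_exp]
  congr 2
  simp

theorem eLpNorm_volterra1_top_le (z₁ : ℂ) {q f₂ : ℝ → ℂ} (hq : AEStronglyMeasurable q volume)
    (hf₂ : AEStronglyMeasurable f₂ volume) :
    eLpNorm (volterra1 z₁ q f₂) ⊤ volume
      ≤ ENNReal.ofReal ‖z₁‖ * eLpNorm q 2 volume * eLpNorm f₂ 2 volume := by
  have holder : eLpNorm (q • f₂) 1 volume ≤ eLpNorm q 2 volume * eLpNorm f₂ 2 volume :=
    eLpNorm_smul_le_mul_eLpNorm (p := 2) (q := 2) hf₂ hq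
  refine eLpNormEssSup_le_of_ae_enorm_bound (Filter.Eventually.of_forall fun x => ?_)
  rw [volterra1, enorm_mul, ofReal_norm, mul_assoc]
  gcongr
  calc _ ≤ ∫⁻ s in Set.Iic x, ‖q s * f₂ s‖ₑ := enorm_integral_le_lintegral_enorm _
    _ ≤ ∫⁻ s, ‖q s * f₂ s‖ₑ := setLIntegral_le_lintegral _ _
    _ ≤ _ := by simpa [eLpNorm_one_eq_lintegral_enorm] using holder

theorem enorm_volterra2_le (z₁ : ℂ) {q : ℝ → ℂ} (hq : AEStronglyMeasurable q volume)
    (f₁ : ℝ → ℂ) (x : ℝ) :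
    ‖volterra2 z₁ q f₁ x‖ₑ
      ≤ ‖z₁‖ₑ * eLpNorm f₁ ⊤ volume * ((‖q ·‖ₑ) ⋆ₗ expDecayKernel (2 * (z₁ ^ 2).im)) x := by
  have hf₁ : ∀ᵐ s, ‖f₁ s‖ₑ ≤ eLpNorm f₁ ⊤ volume := enorm_ae_le_eLpNormEssSup f₁ volume
  rw [volterra2, enorm_mul, enorm_neg, expDecayKernel.lconvolution_eq, mul_assoc ‖z₁‖ₑ,
    ← lintegral_const_mul'' _ (by fun_prop)]
  gcongr ‖z₁‖ₑ * ?_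
  refine (enorm_integral_le_lintegral_enorm _).trans (lintegral_mono_ae ?_)
  filter_upwards [ae_restrict_of_ae hf₁] with s hs
  rw [← ofReal_sub, enorm_mul, enorm_mul, enorm_cexp_two_I_mul, RCLike.enorm_conj]
  calc _ ≤ _ * ‖q s‖ₑ * eLpNorm f₁ ⊤ volume := by gcongr
    _ = _ := by ring

section Volterra2

variable {z₁ : ℂ} {q : ℝ → ℂ}

theorem eLpNorm_volterra2_top_le (hz : 0 < (z₁ ^ 2).im) (hq : AEStronglyMeasurable q volume)
    (f₁ : ℝ → ℂ) :
    eLpNorm (volterra2 z₁ q f₁) ⊤ volume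
      ≤ ENNReal.ofReal (‖z₁‖ * √(4 * (z₁ ^ 2).im)⁻¹) * eLpNorm q 2 volume
        * eLpNorm f₁ ⊤ volume := by
  refine eLpNormEssSup_le_of_ae_enorm_bound (Filter.Eventually.of_forall fun x =>
    (enorm_volterra2_le z₁ hq f₁ x).trans ?_)
  have h := lconvolution_le_eLpNorm_mul_eLpNorm hq.enorm
    (expDecayKernel.measurable (2 * (z₁ ^ 2).im)).aemeasurable x
  rw [eLpNorm_enorm, expDecayKernel.eLpNorm_two (by positivity),
    show 2 * (2 * (z₁ ^ 2).im) = 4 * (z₁ ^ 2).im by ring] at h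
  calc _ ≤ ‖z₁‖ₑ * eLpNorm f₁ ⊤ volume
        * (eLpNorm q 2 volume * ENNReal.ofReal √(4 * (z₁ ^ 2).im)⁻¹) := by gcongr
    _ = _ := by rw [ENNReal.ofReal_mul (norm_nonneg _), ofReal_norm]; ring

theorem eLpNorm_volterra2_two_le (hz : 0 < (z₁ ^ 2).im) (hq : AEStronglyMeasurable q volume)
    (f₁ : ℝ → ℂ) :
    eLpNorm (volterra2 z₁ q f₁) 2 volume
      ≤ ENNReal.ofReal (‖z₁‖ * (2 * (z₁ ^ 2).im)⁻¹) * eLpNorm q 2 volume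
        * eLpNorm f₁ ⊤ volume := by
  have hκ := (expDecayKernel.measurable (2 * (z₁ ^ 2).im)).aemeasurable (μ := volume)
  have young := eLpNorm_lconvolution_le hq.enorm hκ
  rw [eLpNorm_enorm, expDecayKernel.eLpNorm_one (by positivity)] at young
  calc eLpNorm (volterra2 z₁ q f₁) 2 volume
      ≤ ‖z₁‖ₑ * eLpNorm f₁ ⊤ volume
        * eLpNorm ((‖q ·‖ₑ) ⋆ₗ expDecayKernel (2 * (z₁ ^ 2).im)) 2 volume := by
        rw [eLpNorm_eq_eLpNorm' two_ne_zero ENNReal.ofNat_ne_top,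
          eLpNorm_eq_eLpNorm' two_ne_zero ENNReal.ofNat_ne_top]
        refine eLpNorm'_le_mul_eLpNorm'_of_ae_le_mul
          (aemeasurable_lconvolution hq.enorm hκ).aestronglyMeasurable
          (Filter.Eventually.of_forall fun x => ?_) (by norm_num)
        rw [enorm_eq_self]
        exact enorm_volterra2_le z₁ hq f₁ x
    _ ≤ ‖z₁‖ₑ * eLpNorm f₁ ⊤ volume
        * (ENNReal.ofReal (2 * (z₁ ^ 2).im)⁻¹ * eLpNorm q 2 volume) := by gcongr
    _ = _ := by rw [ENNReal.ofReal_mul (norm_nonneg _), ofReal_norm]; ring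

theorem volterra_bounds (hz : 0 < (z₁ ^ 2).im) (hq : AEStronglyMeasurable q volume)
    (f₁ : ℝ → ℂ) {f₂ : ℝ → ℂ} (hf₂ : AEStronglyMeasurable f₂ volume) {C : ℝ}
    (hC₁ : ‖z₁‖ * √(4 * (z₁ ^ 2).im)⁻¹ ≤ C) (hC₂ : ‖z₁‖ * (2 * (z₁ ^ 2).im)⁻¹ ≤ C) :
    eLpNorm (volterra1 z₁ q f₂) ⊤ volume
        ≤ ENNReal.ofReal ‖z₁‖ * eLpNorm q 2 volume * eLpNorm f₂ 2 volume ∧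
      eLpNorm (volterra2 z₁ q f₁) ⊤ volume
        ≤ ENNReal.ofReal C * eLpNorm q 2 volume * eLpNorm f₁ ⊤ volume ∧
      eLpNorm (volterra2 z₁ q f₁) 2 volume
        ≤ ENNReal.ofReal C * eLpNorm q 2 volume * eLpNorm f₁ ⊤ volume :=
  ⟨eLpNorm_volterra1_top_le z₁ hq hf₂,
    (eLpNorm_volterra2_top_le hz hq f₁).trans (by gcongr),
    (eLpNorm_volterra2_two_le hz hq f₁).trans (by gcongr)⟩

end Volterra2

theorem ENNReal.add_add_le_half_of_le_inv_four {x₁ x₂ x₃ a b M S N : ℝ≥0∞}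
    (h₁ : x₁ ≤ a * N) (h₂ : x₂ ≤ b * M) (h₃ : x₃ ≤ b * M) (ha : a ≤ 4⁻¹) (hb : b ≤ 4⁻¹) :
    x₁ + x₂ + x₃ ≤ 1 / 2 * (M + S + N) := by
  have h4 : (4 : ℝ≥0∞)⁻¹ = 2⁻¹ * 2⁻¹ := by
    rw [← ENNReal.mul_inv (by simp) (by simp)]
    norm_num
  calc x₁ + x₂ + x₃ ≤ 4⁻¹ * N + 4⁻¹ * M + 4⁻¹ * M := by
        gcongr
        exacts [h₁.trans (by gcongr), h₂.trans (by gcongr), h₃.trans (by gcongr)]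
    _ = 2⁻¹ * ((2⁻¹ + 2⁻¹) * M + 2⁻¹ * N) := by rw [h4]; ring
    _ = 2⁻¹ * (M + 2⁻¹ * N) := by rw [ENNReal.inv_two_add_inv_two, one_mul]
    _ ≤ 2⁻¹ * (M + S + N) := by
        gcongr
        · exact le_self_add
        · exact mul_le_of_le_one_left zero_le (by norm_num)
    _ = 1 / 2 * (M + S + N) := by rw [one_div]

theorem volterra_bounds_and_contraction (z₁ : ℂ) (η : ℝ)
    (hη : (z₁ ^ 2).im = η) (hηpos : 0 < η) :
    (∃ C > 0, ∀ q : ℝ → ℂ, MemLp q 2 (volume : Measure ℝ) →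
      ∀ f₁ f₂ : ℝ → ℂ, MemLp f₁ ⊤ (volume : Measure ℝ) →
        MemLp f₂ ⊤ (volume : Measure ℝ) → MemLp f₂ 2 (volume : Measure ℝ) →
        eLpNorm (volterra1 z₁ q f₂) ⊤ volume
            ≤ ENNReal.ofReal ‖z₁‖ * eLpNorm q 2 volume * eLpNorm f₂ 2 volume ∧
        eLpNorm (volterra2 z₁ q f₁) ⊤ volume
            ≤ ENNReal.ofReal C * eLpNorm q 2 volume * eLpNorm f₁ ⊤ volume ∧
        eLpNorm (volterra2 z₁ q f₁) 2 volume
            ≤ ENNReal.ofReal C * eLpNorm q 2 volume * eLpNorm f₁ ⊤ volume) ∧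
    -- consequently, `T` is a contraction for `‖q‖_{L²}` small enough:
    (∃ δ > 0, ∀ q : ℝ → ℂ, MemLp q 2 (volume : Measure ℝ) →
      eLpNorm q 2 volume ≤ ENNReal.ofReal δ →
      ∀ f₁ f₂ : ℝ → ℂ, MemLp f₁ ⊤ (volume : Measure ℝ) →
        MemLp f₂ ⊤ (volume : Measure ℝ) → MemLp f₂ 2 (volume : Measure ℝ) →
        eLpNorm (volterra1 z₁ q f₂) ⊤ volume
            + eLpNorm (volterra2 z₁ q f₁) ⊤ volume
            + eLpNorm (volterra2 z₁ q f₁) 2 volume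
          ≤ (1 / 2 : ENNReal) *
            (eLpNorm f₁ ⊤ volume + eLpNorm f₂ ⊤ volume + eLpNorm f₂ 2 volume)) := by
  subst hη
  set C := max (‖z₁‖ * √(4 * (z₁ ^ 2).im)⁻¹) (‖z₁‖ * (2 * (z₁ ^ 2).im)⁻¹)
  have hC : 0 < C := lt_max_of_lt_right <| mul_pos
    (norm_pos_iff.2 fun h => by simp [h] at hηpos) (by positivity)
  refine ⟨⟨C, hC, fun q hq f₁ f₂ _ _ hf₂ =>
      volterra_bounds hηpos hq.1 f₁ hf₂.1 (le_max_left _ _) (le_max_right _ _)⟩,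
    (4 * (‖z₁‖ + C))⁻¹, by positivity, fun q hq hqδ f₁ f₂ _ _ hf₂ => ?_⟩
  obtain ⟨h₁, h₂, h₃⟩ :=
    volterra_bounds hηpos hq.1 f₁ hf₂.1 (le_max_left _ _) (le_max_right _ _)
  have small : ∀ a, 0 ≤ a → a ≤ ‖z₁‖ + C → ENNReal.ofReal a * eLpNorm q 2 volume ≤ 4⁻¹ := by
    intro a ha haC
    calc ENNReal.ofReal a * eLpNorm q 2 volume
        ≤ ENNReal.ofReal (a * (4 * (‖z₁‖ + C))⁻¹) := by rw [ENNReal.ofReal_mul ha]; gcongr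
      _ ≤ ENNReal.ofReal 4⁻¹ := by
          gcongr
          rw [← div_eq_mul_inv, div_le_iff₀ (by positivity)]
          linarith
      _ = 4⁻¹ := by simp
  exact ENNReal.add_add_le_half_of_le_inv_four h₁ h₂ h₃
    (small _ (norm_nonneg _) (by linarith)) (small _ hC.le (by linarith [norm_nonneg z₁]))
end
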